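/- Let n, m, κ, d' ≥ 1 be integers, d = κd', and let r ≥ 2. Suppose each matrix A_i ∈ ℝ^{m×n^κ} (i = 1,…,d') satisfies RIP(ε, S_{1,2}), set δ = 4d'r^d ε, and assume δ < 1. Then 𝒜∘R satisfies TRIP(δ,(r,…,r)): for every d-mode tensor X with side length n of HOSVD rank at most (r,…,r), (1−δ)‖X‖_F² ≤ ‖𝒜(R(X))‖_F² ≤ (1+δ)‖X‖_F². -/
import Mathlib


open Finset

noncomputable section

/-- Squared Euclidean (Frobenius) norm of a finitely-indexed real vector/tensor. -/
def enorm2 {ι : Type*} [Fintype ι] (x : ι → ℝ) : ℝ := ∑ i, (x i) ^ 2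

/-- Euclidean (trace) inner product. -/
def dotp {ι : Type*} [Fintype ι] (x y : ι → ℝ) : ℝ := ∑ i, x i * y i

/-- Kronecker product of `κ` vectors in `ℝ^n`, as a vector in `ℝ^{n^κ}`
(identifying `ℝ^{n^κ}` with `(Fin κ → Fin n) → ℝ` lexicographically). -/
def kron {n κ : ℕ} (u : Fin κ → (Fin n → ℝ)) : Fin (n ^ κ) → ℝ :=
  fun j => ∏ i, u i (finFunctionFinEquiv.symm j i)

/-- `S₁`: Kronecker products of `κ` unit vectors of `ℝ^n`. -/
def S1 (n κ : ℕ) : Set (Fin (n ^ κ) → ℝ) :=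
  {x | ∃ u : Fin κ → (Fin n → ℝ), (∀ i, enorm2 (u i) = 1) ∧ x = kron u}

/-- `S₂`: normalized sums of two orthogonal elements of `S₁`. -/
def S2 (n κ : ℕ) : Set (Fin (n ^ κ) → ℝ) :=
  {z | ∃ x ∈ S1 n κ, ∃ y ∈ S1 n κ, dotp x y = 0 ∧
        z = (Real.sqrt (enorm2 (x + y)))⁻¹ • (x + y)}

/-- `S_{1,2} = S₁ ∪ S₂`. -/
def S12 (n κ : ℕ) : Set (Fin (n ^ κ) → ℝ) := S1 n κ ∪ S2 n κ

/-- The matrix `A` satisfies RIP(ε, S): `(1-ε)‖s‖² ≤ ‖As‖² ≤ (1+ε)‖s‖²` for all `s ∈ S`. -/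
def MatrixRIP {m N : ℕ} (A : Matrix (Fin m) (Fin N) ℝ) (ε : ℝ) (S : Set (Fin N → ℝ)) : Prop :=
  ∀ s ∈ S, (1 - ε) * enorm2 s ≤ enorm2 (A.mulVec s) ∧
    enorm2 (A.mulVec s) ≤ (1 + ε) * enorm2 s

/-- Index identification merging each block of `κ` consecutive indices (block `i` of the
original `d = κ·d'` indices becomes mode `i` of the reshaped tensor, merged lexicographically). -/
def reshapeIdx (n κ d' : ℕ) : (Fin (κ * d') → Fin n) ≃ (Fin d' → Fin (n ^ κ)) :=
  (Equiv.arrowCongr ((finCongr (Nat.mul_comm κ d')).trans finProdFinEquiv.symm)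
      (Equiv.refl (Fin n))).trans
    ((Equiv.curry (Fin d') (Fin κ) (Fin n)).trans
      (Equiv.piCongrRight fun _ => finFunctionFinEquiv))

/-- The reshaping operator `R` turning a `d = κ·d'`-mode tensor with side length `n`
into a `d'`-mode tensor with side length `n^κ`. -/
def reshape (n κ d' : ℕ) (X : (Fin (κ * d') → Fin n) → ℝ) : (Fin d' → Fin (n ^ κ)) → ℝ :=
  fun j => X ((reshapeIdx n κ d').symm j)

/-- The modewise measurement map `𝒜(Y) = Y ×₁ A₁ ×₂ ⋯ ×_{d'} A_{d'}`. -/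
def modewiseAll {d' N m : ℕ} (A : Fin d' → Matrix (Fin m) (Fin N) ℝ)
    (Y : (Fin d' → Fin N) → ℝ) : (Fin d' → Fin m) → ℝ :=
  fun ℓ => ∑ j : Fin d' → Fin N, Y j * ∏ i, A i (ℓ i) (j i)

/-- `X` has HOSVD rank at most `(r, …, r)`: it is expressible with a core tensor `C` and
orthonormal factor vectors `u^i_1, …, u^i_r` in each mode. -/
def HOSVDRankLE (d n r : ℕ) (X : (Fin d → Fin n) → ℝ) : Prop :=
  ∃ (C : (Fin d → Fin r) → ℝ) (u : Fin d → Fin r → (Fin n → ℝ)),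
    (∀ i k, enorm2 (u i k) = 1) ∧
    (∀ i k k', k ≠ k' → dotp (u i k) (u i k') = 0) ∧
    (∀ t, X t = ∑ k : Fin d → Fin r, C k * ∏ i, u i (k i) (t i))

/-- Vectorization of a `d'`-mode tensor with side length `m` into `ℝ^{m^{d'}}`
(via the lexicographic index bijection). -/
def vect {d' m : ℕ} (Y : (Fin d' → Fin m) → ℝ) : Fin (m ^ d') → ℝ :=
  fun j => Y (finFunctionFinEquiv.symm j)

end

section helpers


lemma enorm2_nonneg {ι : Type*} [Fintype ι] (x : ι → ℝ) : 0 ≤ enorm2 x :=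
  Finset.sum_nonneg fun _ _ => sq_nonneg _

lemma enorm2_eq_dotp {ι : Type*} [Fintype ι] (x : ι → ℝ) : enorm2 x = dotp x x := by
  simp [enorm2, dotp, sq]

lemma enorm2_add {ι : Type*} [Fintype ι] (x y : ι → ℝ) :
    enorm2 (x + y) = enorm2 x + 2 * dotp x y + enorm2 y := by
  simp only [enorm2, dotp, Pi.add_apply, Finset.mul_sum]
  rw [← Finset.sum_add_distrib, ← Finset.sum_add_distrib]
  congr 1; funext i; ring

lemma enorm2_smul {ι : Type*} [Fintype ι] (c : ℝ) (x : ι → ℝ) :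
    enorm2 (c • x) = c ^ 2 * enorm2 x := by
  simp [enorm2, Finset.mul_sum, mul_pow]

lemma prod_sum_pi {ι : Type*} [Fintype ι] [DecidableEq ι] {β : Type*} [Fintype β]
    (f : ι → β → ℝ) : ∑ g : ι → β, ∏ i, f i (g i) = ∏ i, ∑ x, f i x := by
  rw [Finset.prod_univ_sum]
  rw [Fintype.piFinset_univ]

lemma dotp_prodfun {ι : Type*} [Fintype ι] [DecidableEq ι] {β : Type*} [Fintype β]
    (f g : ι → β → ℝ) :
    dotp (fun t : ι → β => ∏ i, f i (t i)) (fun t => ∏ i, g i (t i)) =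
      ∏ i, dotp (f i) (g i) := by
  unfold dotp
  simp_rw [← Finset.prod_mul_distrib]
  exact prod_sum_pi (fun i x => f i x * g i x)

lemma kron_dotp {n κ : ℕ} (u v : Fin κ → (Fin n → ℝ)) :
    dotp (kron u) (kron v) = ∏ i, dotp (u i) (v i) := by
  have := dotp_prodfun u v
  rw [← this]
  unfold dotp kron
  rw [← Equiv.sum_comp (finFunctionFinEquiv (m := n) (n := κ))]
  simp

lemma enorm2_comb {α : Type*} [Fintype α] {β : Type*} [Fintype β]
    (w : α → β → ℝ) (c : α → ℝ) :
    enorm2 (fun x => ∑ k, c k * w k x) =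
      ∑ k, ∑ k', c k * c k' * dotp (w k) (w k') := by
  unfold enorm2 dotp
  simp_rw [sq, Finset.sum_mul_sum, Finset.mul_sum]
  rw [Finset.sum_comm]
  congr 1; funext k
  rw [Finset.sum_comm]
  congr 1; funext k'
  congr 1; funext x
  ring

end helpers


lemma lemB {β : Type*} [Fintype β] {R : ℕ} (ε : ℝ) (hε : 0 ≤ ε)
    (w : Fin R → β → ℝ)
    (hdiag : ∀ k, 1 - ε ≤ enorm2 (w k) ∧ enorm2 (w k) ≤ 1 + ε)
    (hoff : ∀ k k', k ≠ k' → |dotp (w k) (w k')| ≤ 2 * ε)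
    (c : Fin R → ℝ) :
    (1 - (2 * R - 1) * ε) * (∑ k, c k ^ 2) ≤ enorm2 (fun x => ∑ k, c k * w k x) ∧
      enorm2 (fun x => ∑ k, c k * w k x) ≤ (1 + (2 * R - 1) * ε) * (∑ k, c k ^ 2) := by
  set S := ∑ k, c k ^ 2 with hS
  set Q := ∑ k, ∑ k', c k * c k' * dotp (w k) (w k') with hQ
  have hQS : |Q - S| ≤ (2 * R - 1) * ε * S := by
    have hsplit : Q - S = ∑ k, (c k ^ 2 * (dotp (w k) (w k) - 1) +
        ∑ k' ∈ Finset.univ.erase k, c k * c k' * dotp (w k) (w k')) := by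
      rw [hQ, hS, ← Finset.sum_sub_distrib]
      refine Finset.sum_congr rfl fun k _ => ?_
      rw [← Finset.add_sum_erase _ _ (Finset.mem_univ k)]
      ring
    have habs : |Q - S| ≤ ∑ k, (c k ^ 2 * ε +
        ∑ k' ∈ Finset.univ.erase k, |c k| * |c k'| * (2 * ε)) := by
      rw [hsplit]
      refine (Finset.abs_sum_le_sum_abs _ _).trans (Finset.sum_le_sum fun k _ => ?_)
      refine (abs_add_le _ _).trans (add_le_add ?_ ?_)
      · rw [abs_mul, abs_of_nonneg (sq_nonneg (c k))]
        refine mul_le_mul_of_nonneg_left ?_ (sq_nonneg _)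
        rw [abs_le]
        have := hdiag k
        rw [enorm2_eq_dotp] at this
        constructor <;> linarith [this.1, this.2]
      · refine (Finset.abs_sum_le_sum_abs _ _).trans (Finset.sum_le_sum fun k' hk' => ?_)
        rw [abs_mul, abs_mul]
        refine mul_le_mul_of_nonneg_left ?_ (by positivity)
        exact hoff k k' (fun h => (Finset.mem_erase.mp hk').1 h.symm)
    have hT : ∑ k, ∑ k' ∈ Finset.univ.erase k, |c k| * |c k'| ≤ (R - 1) * S := by
      have h1 : ∀ k, ∑ k' ∈ Finset.univ.erase k, |c k| * |c k'| =
          |c k| * ((∑ k', |c k'|) - |c k|) := by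
        intro k
        rw [← Finset.mul_sum, Finset.sum_erase_eq_sub (Finset.mem_univ k)]
      have h2 : (∑ k, |c k|) ^ 2 ≤ R * S := by
        have := Finset.sum_mul_sq_le_sq_mul_sq Finset.univ (fun _ => (1 : ℝ)) (fun k => |c k|)
        simpa [sq_abs, hS] using this
      calc ∑ k, ∑ k' ∈ Finset.univ.erase k, |c k| * |c k'|
          = (∑ k, |c k|) * (∑ k, |c k|) - ∑ k, |c k| ^ 2 := by
            simp_rw [h1, mul_sub]
            rw [Finset.sum_sub_distrib, ← Finset.sum_mul]
            simp [sq]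
        _ ≤ R * S - S := by
            have h3 : ∑ k, |c k| ^ 2 = S := by simp [hS, sq_abs]
            nlinarith [h2]
        _ = (R - 1) * S := by ring
    calc |Q - S| ≤ ∑ k, (c k ^ 2 * ε +
          ∑ k' ∈ Finset.univ.erase k, |c k| * |c k'| * (2 * ε)) := habs
      _ = ε * S + 2 * ε * ∑ k, ∑ k' ∈ Finset.univ.erase k, |c k| * |c k'| := by
          rw [Finset.sum_add_distrib]
          congr 1
          · rw [← Finset.sum_mul]; ring
          · rw [Finset.mul_sum]
            refine Finset.sum_congr rfl fun k _ => ?_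
            rw [Finset.mul_sum]
            refine Finset.sum_congr rfl fun k' _ => ?_
            ring
      _ ≤ ε * S + 2 * ε * ((R - 1) * S) := by
          have hS0 : 0 ≤ S := Finset.sum_nonneg fun _ _ => sq_nonneg _
          nlinarith [hT]
      _ = (2 * R - 1) * ε * S := by ring
  rw [enorm2_comb, ← hQ]
  rw [abs_le] at hQS
  constructor <;> nlinarith [hQS.1, hQS.2]


lemma S1_enorm2 {n κ : ℕ} {x : Fin (n ^ κ) → ℝ} (hx : x ∈ S1 n κ) : enorm2 x = 1 := by
  obtain ⟨u, hu, rfl⟩ := hx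
  rw [enorm2_eq_dotp, kron_dotp]
  refine Finset.prod_eq_one fun i _ => ?_
  rw [← enorm2_eq_dotp, hu i]



lemma lemA {n m κ : ℕ} (A : Matrix (Fin m) (Fin (n ^ κ)) ℝ) (ε : ℝ)
    (hA : MatrixRIP A ε (S12 n κ)) {x y : Fin (n ^ κ) → ℝ}
    (hx : x ∈ S1 n κ) (hy : y ∈ S1 n κ) (hxy : dotp x y = 0) :
    |dotp (A.mulVec x) (A.mulVec y)| ≤ 2 * ε := by
  have hx1 : enorm2 x = 1 := S1_enorm2 hx
  have hy1 : enorm2 y = 1 := S1_enorm2 hy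
  have hsum : enorm2 (x + y) = 2 := by rw [enorm2_add, hx1, hy1, hxy]; ring
  set z := (Real.sqrt (enorm2 (x + y)))⁻¹ • (x + y) with hzdef
  have hzS : z ∈ S12 n κ := Or.inr ⟨x, hx, y, hy, hxy, rfl⟩
  have hz1 : enorm2 z = 1 := by
    rw [hzdef, enorm2_smul, hsum, inv_pow, Real.sq_sqrt (by norm_num : (0:ℝ) ≤ 2)]
    norm_num
  have hAz := hA z hzS
  rw [hz1, mul_one, mul_one] at hAz
  have hAzval : enorm2 (A.mulVec z) = (1/2) * enorm2 (A.mulVec (x + y)) := by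
    rw [hzdef, Matrix.mulVec_smul, enorm2_smul, hsum, inv_pow,
      Real.sq_sqrt (by norm_num : (0:ℝ) ≤ 2)]
    ring
  have hexp : enorm2 (A.mulVec (x + y)) =
      enorm2 (A.mulVec x) + 2 * dotp (A.mulVec x) (A.mulVec y) + enorm2 (A.mulVec y) := by
    rw [Matrix.mulVec_add, enorm2_add]
  have hxb := hA x (Or.inl hx); rw [hx1, mul_one, mul_one] at hxb
  have hyb := hA y (Or.inl hy); rw [hy1, mul_one, mul_one] at hyb
  rw [hAzval, hexp] at hAz
  rw [abs_le]
  constructor <;> linarith [hAz.1, hAz.2, hxb.1, hxb.2, hyb.1, hyb.2]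


lemma pow_one_add_le (x : ℝ) (hx : 0 ≤ x) :
    ∀ nn : ℕ, 2 * nn * x ≤ 1 → (1 + x) ^ nn ≤ 1 + 2 * nn * x := by
  intro nn
  induction nn with
  | zero => simp
  | succ s ih =>
    intro h
    have hs : 2 * (s : ℝ) * x ≤ 1 := by
      push_cast at h ⊢
      nlinarith
    have := ih hs
    rw [pow_succ]
    push_cast at h this ⊢
    nlinarith [pow_nonneg (by linarith : (0:ℝ) ≤ 1 + x) s]



lemma consEquiv_eq {q : ℕ} {β : Type*} (p : β × (Fin q → β)) :
    (Fin.consEquiv fun _ => β) p = Fin.cons p.1 p.2 := rfl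

lemma lemQ {mm R : ℕ} (η : ℝ) (hη0 : 0 ≤ η) (hη1 : η ≤ 1) :
    ∀ (s : ℕ) (w : Fin s → Fin R → (Fin mm → ℝ)),
    (∀ i (c : Fin R → ℝ),
      (1 - η) * (∑ k, c k ^ 2) ≤ enorm2 (fun x => ∑ k, c k * w i k x) ∧
      enorm2 (fun x => ∑ k, c k * w i k x) ≤ (1 + η) * (∑ k, c k ^ 2)) →
    ∀ D : (Fin s → Fin R) → ℝ,
    (1 - η) ^ s * (∑ K, D K ^ 2) ≤
        (∑ ℓ : Fin s → Fin mm, (∑ K, D K * ∏ i, w i (K i) (ℓ i)) ^ 2) ∧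
      (∑ ℓ : Fin s → Fin mm, (∑ K, D K * ∏ i, w i (K i) (ℓ i)) ^ 2) ≤
        (1 + η) ^ s * (∑ K, D K ^ 2) := by
  intro s
  induction s with
  | zero =>
    intro w _ D
    simp
  | succ s ih =>
    intro w hw D
    set wr : Fin s → Fin R → (Fin mm → ℝ) := fun i => w i.succ with hwr_def
    have hwr : ∀ i (c : Fin R → ℝ),
        (1 - η) * (∑ k, c k ^ 2) ≤ enorm2 (fun x => ∑ k, c k * wr i k x) ∧
        enorm2 (fun x => ∑ k, c k * wr i k x) ≤ (1 + η) * (∑ k, c k ^ 2) :=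
      fun i c => hw i.succ c
    set c : (Fin s → Fin mm) → Fin R → ℝ :=
      fun ℓr k0 => ∑ Kr : Fin s → Fin R, D (Fin.cons k0 Kr) * ∏ i, wr i (Kr i) (ℓr i)
      with hc_def
    have hinner : ∀ (ℓ0 : Fin mm) (ℓr : Fin s → Fin mm),
        (∑ K : Fin (s+1) → Fin R, D K * ∏ i, w i (K i) ((Fin.cons ℓ0 ℓr : Fin (s+1) → Fin mm) i)) =
          ∑ k0, c ℓr k0 * w 0 k0 ℓ0 := by
      intro ℓ0 ℓr
      rw [← Equiv.sum_comp (Fin.consEquiv fun _ => Fin R), Fintype.sum_prod_type]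
      refine Finset.sum_congr rfl fun k0 _ => ?_
      rw [hc_def]
      simp only [consEquiv_eq]
      rw [Finset.sum_mul]
      refine Finset.sum_congr rfl fun Kr _ => ?_
      rw [Fin.prod_univ_succ]
      simp only [Fin.cons_zero, Fin.cons_succ, hwr_def]
      ring
    have hsplit : (∑ ℓ : Fin (s+1) → Fin mm, (∑ K, D K * ∏ i, w i (K i) (ℓ i)) ^ 2) =
        ∑ ℓr : Fin s → Fin mm, enorm2 (fun ℓ0 => ∑ k0, c ℓr k0 * w 0 k0 ℓ0) := by
      rw [← Equiv.sum_comp (Fin.consEquiv fun _ => Fin mm), Fintype.sum_prod_type]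
      rw [Finset.sum_comm]
      refine Finset.sum_congr rfl fun ℓr _ => ?_
      unfold enorm2
      refine Finset.sum_congr rfl fun ℓ0 _ => ?_
      simp only [consEquiv_eq]
      rw [hinner ℓ0 ℓr]
    have hDsum : (∑ k0, ∑ Kr : Fin s → Fin R, D (Fin.cons k0 Kr) ^ 2) =
        ∑ K : Fin (s+1) → Fin R, D K ^ 2 := by
      rw [← Equiv.sum_comp (Fin.consEquiv fun _ => Fin R), Fintype.sum_prod_type]
      simp [consEquiv_eq]
    have hIH : ∀ k0 : Fin R,
        (1 - η) ^ s * (∑ Kr, D (Fin.cons k0 Kr) ^ 2) ≤ (∑ ℓr, c ℓr k0 ^ 2) ∧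
          (∑ ℓr, c ℓr k0 ^ 2) ≤ (1 + η) ^ s * (∑ Kr, D (Fin.cons k0 Kr) ^ 2) :=
      fun k0 => ih wr hwr (fun Kr => D (Fin.cons k0 Kr))
    have hcs : ∀ ℓr : Fin s → Fin mm,
        (1 - η) * (∑ k0, c ℓr k0 ^ 2) ≤ enorm2 (fun ℓ0 => ∑ k0, c ℓr k0 * w 0 k0 ℓ0) ∧
          enorm2 (fun ℓ0 => ∑ k0, c ℓr k0 * w 0 k0 ℓ0) ≤ (1 + η) * (∑ k0, c ℓr k0 ^ 2) :=
      fun ℓr => hw 0 (c ℓr)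
    have hswap : (∑ ℓr : Fin s → Fin mm, ∑ k0, c ℓr k0 ^ 2) = ∑ k0, ∑ ℓr, c ℓr k0 ^ 2 :=
      Finset.sum_comm
    constructor
    · rw [hsplit]
      calc (1 - η) ^ (s+1) * (∑ K, D K ^ 2)
          = (1 - η) * ((1 - η) ^ s * (∑ k0, ∑ Kr, D (Fin.cons k0 Kr) ^ 2)) := by
            rw [hDsum]; ring
        _ ≤ (1 - η) * (∑ k0, ∑ ℓr, c ℓr k0 ^ 2) := by
            refine mul_le_mul_of_nonneg_left ?_ (by linarith)
            rw [Finset.mul_sum]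
            exact Finset.sum_le_sum fun k0 _ => (hIH k0).1
        _ = ∑ ℓr, (1 - η) * (∑ k0, c ℓr k0 ^ 2) := by
            rw [← hswap, Finset.mul_sum]
        _ ≤ ∑ ℓr, enorm2 (fun ℓ0 => ∑ k0, c ℓr k0 * w 0 k0 ℓ0) :=
            Finset.sum_le_sum fun ℓr _ => (hcs ℓr).1
    · rw [hsplit]
      calc (∑ ℓr, enorm2 (fun ℓ0 => ∑ k0, c ℓr k0 * w 0 k0 ℓ0))
          ≤ ∑ ℓr, (1 + η) * (∑ k0, c ℓr k0 ^ 2) :=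
            Finset.sum_le_sum fun ℓr _ => (hcs ℓr).2
        _ = (1 + η) * (∑ k0, ∑ ℓr, c ℓr k0 ^ 2) := by
            rw [← hswap, Finset.mul_sum]
        _ ≤ (1 + η) * ((1 + η) ^ s * (∑ k0, ∑ Kr, D (Fin.cons k0 Kr) ^ 2)) := by
            refine mul_le_mul_of_nonneg_left ?_ (by linarith)
            rw [Finset.mul_sum]
            exact Finset.sum_le_sum fun k0 _ => (hIH k0).2
        _ = (1 + η) ^ (s+1) * (∑ K, D K ^ 2) := by
            rw [hDsum]; ring


lemma gram_ortho {d n r : ℕ} (C : (Fin d → Fin r) → ℝ) (u : Fin d → Fin r → Fin n → ℝ)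
    (hu1 : ∀ i k, enorm2 (u i k) = 1)
    (huo : ∀ i k k', k ≠ k' → dotp (u i k) (u i k') = 0) :
    enorm2 (fun t : Fin d → Fin n => ∑ k, C k * ∏ i, u i (k i) (t i)) = ∑ k, C k ^ 2 := by
  have h1 :
      enorm2 (fun t : Fin d → Fin n => ∑ k, C k * ∏ i, u i (k i) (t i)) =
        ∑ k, ∑ k', C k * C k' *
          dotp (fun t : Fin d → Fin n => ∏ i, u i (k i) (t i))
            (fun t => ∏ i, u i (k' i) (t i)) := enorm2_comb _ C
  rw [h1]
  have hδ : ∀ k k' : Fin d → Fin r,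
      dotp (fun t : Fin d → Fin n => ∏ i, u i (k i) (t i)) (fun t => ∏ i, u i (k' i) (t i)) =
        if k = k' then 1 else 0 := by
    intro k k'
    rw [dotp_prodfun]
    by_cases h : k = k'
    · subst h
      simp only [if_pos rfl]
      exact Finset.prod_eq_one fun i _ => by rw [← enorm2_eq_dotp, hu1]
    · rw [if_neg h]
      obtain ⟨i, hi⟩ := Function.ne_iff.mp h
      exact Finset.prod_eq_zero (Finset.mem_univ i) (huo i _ _ hi)
  simp only [hδ, mul_ite, mul_one, mul_zero]
  rw [Finset.sum_congr rfl fun k _ => Finset.sum_ite_eq Finset.univ k (fun k' => C k * C k')]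
  simp [sq]


def eBlk (κ d' : ℕ) : Fin (κ * d') ≃ Fin d' × Fin κ :=
  (finCongr (Nat.mul_comm κ d')).trans finProdFinEquiv.symm

lemma reshapeIdx_symm_apply (n κ d' : ℕ) (j : Fin d' → Fin (n ^ κ)) (i : Fin (κ * d')) :
    (reshapeIdx n κ d').symm j i =
      finFunctionFinEquiv.symm (j (eBlk κ d' i).1) (eBlk κ d' i).2 := rfl


lemma reshape_decomp {n κ d' r : ℕ} (C : (Fin (κ * d') → Fin r) → ℝ)
    (u : Fin (κ * d') → Fin r → Fin n → ℝ)
    (X : (Fin (κ * d') → Fin n) → ℝ)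
    (hXeq : ∀ t, X t = ∑ k : Fin (κ * d') → Fin r, C k * ∏ i, u i (k i) (t i)) :
    ∀ j, reshape n κ d' X j =
      ∑ K : Fin d' → Fin (r ^ κ),
        (C ((reshapeIdx r κ d').symm K)) *
          ∏ i', (kron fun a => u ((eBlk κ d').symm (i', a))
            (finFunctionFinEquiv.symm (K i') a)) (j i') := by
  intro j
  unfold reshape
  rw [hXeq]
  rw [← Equiv.sum_comp (reshapeIdx r κ d').symm
    (fun k => C k * ∏ i, u i (k i) ((reshapeIdx n κ d').symm j i))]
  refine Finset.sum_congr rfl fun K _ => ?_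
  congr 1
  rw [← Equiv.prod_comp (eBlk κ d').symm
    (fun i => u i ((reshapeIdx r κ d').symm K i) ((reshapeIdx n κ d').symm j i))]
  rw [Fintype.prod_prod_type]
  refine Finset.prod_congr rfl fun i' _ => ?_
  unfold kron
  refine Finset.prod_congr rfl fun a _ => ?_
  rw [reshapeIdx_symm_apply, reshapeIdx_symm_apply]
  rw [Equiv.apply_symm_apply]

lemma modewise_decomp {d' N m R' : ℕ} (A : Fin d' → Matrix (Fin m) (Fin N) ℝ)
    (D : (Fin d' → Fin R') → ℝ) (V : Fin d' → Fin R' → Fin N → ℝ) :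
    modewiseAll A (fun j => ∑ K, D K * ∏ i, V i (K i) (j i)) =
      fun ℓ => ∑ K, D K * ∏ i, (A i).mulVec (V i (K i)) (ℓ i) := by
  funext ℓ
  simp only [modewiseAll]
  have e1 : ∀ j : Fin d' → Fin N,
      (∑ K, D K * ∏ i, V i (K i) (j i)) * ∏ i, A i (ℓ i) (j i) =
        ∑ K, D K * (∏ i, V i (K i) (j i)) * ∏ i, A i (ℓ i) (j i) := by
    intro j; rw [Finset.sum_mul]
  simp_rw [e1]
  rw [Finset.sum_comm]
  refine Finset.sum_congr rfl fun K _ => ?_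
  have : ∀ j : Fin d' → Fin N,
      D K * (∏ i, V i (K i) (j i)) * ∏ i, A i (ℓ i) (j i) =
        D K * ∏ i, (A i (ℓ i) (j i) * V i (K i) (j i)) := by
    intro j
    rw [mul_assoc, ← Finset.prod_mul_distrib]
    congr 1
    exact Finset.prod_congr rfl fun i _ => mul_comm _ _
  simp_rw [this]
  rw [← Finset.mul_sum, prod_sum_pi (fun i x => A i (ℓ i) x * V i (K i) x)]
  congr 1


/-- Theorem: modewise TRIP. Let `d = κ·d'` and `r ≥ 2`. If each
`Aᵢ ∈ ℝ^{m×n^κ}` satisfies RIP(ε, S_{1,2}), `δ = 4·d'·r^d·ε` and `δ < 1`, then `𝒜∘R`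
satisfies TRIP(δ, (r,…,r)): for every `d`-mode tensor `X` with side length `n` of HOSVD
rank at most `(r,…,r)`, `(1−δ)‖X‖_F² ≤ ‖𝒜(R(X))‖_F² ≤ (1+δ)‖X‖_F²`. -/
theorem stmt1 (n m κ d' r : ℕ) (hn : 1 ≤ n) (hm : 1 ≤ m) (hκ : 1 ≤ κ) (hd' : 1 ≤ d')
    (hr : 2 ≤ r)
    (A : Fin d' → Matrix (Fin m) (Fin (n ^ κ)) ℝ) (ε δ : ℝ)
    (hA : ∀ i, MatrixRIP (A i) ε (S12 n κ))
    (hδ : δ = 4 * d' * (r : ℝ) ^ (κ * d') * ε)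
    (hδ1 : δ < 1)
    (X : (Fin (κ * d') → Fin n) → ℝ)
    (hX : HOSVDRankLE (κ * d') n r X) :
    (1 - δ) * enorm2 X ≤ enorm2 (modewiseAll A (reshape n κ d' X)) ∧
      enorm2 (modewiseAll A (reshape n κ d' X)) ≤ (1 + δ) * enorm2 X := by

  obtain ⟨C, u, hu1, huo, hXeq⟩ := hX
  set D : (Fin d' → Fin (r ^ κ)) → ℝ := fun K => C ((reshapeIdx r κ d').symm K) with hD_def
  set V : Fin d' → Fin (r ^ κ) → Fin (n ^ κ) → ℝ := fun i' k' =>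
    kron fun a => u ((eBlk κ d').symm (i', a)) (finFunctionFinEquiv.symm k' a) with hV_def
  have hY : reshape n κ d' X = fun j => ∑ K, D K * ∏ i, V i (K i) (j i) := by
    funext j
    exact reshape_decomp C u X hXeq j
  have hmod : modewiseAll A (reshape n κ d' X) =
      fun ℓ => ∑ K, D K * ∏ i, (A i).mulVec (V i (K i)) (ℓ i) := by
    rw [hY]
    exact modewise_decomp A D V
  have hVS1 : ∀ i k, V i k ∈ S1 n κ := fun i k => ⟨_, fun a => hu1 _ _, rfl⟩
  have hVorth : ∀ i k k', k ≠ k' → dotp (V i k) (V i k') = 0 := by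
    intro i k k' hk
    rw [hV_def]
    rw [kron_dotp]
    have hne : (finFunctionFinEquiv.symm k : Fin κ → Fin r) ≠ finFunctionFinEquiv.symm k' :=
      fun h => hk (finFunctionFinEquiv.symm.injective h)
    obtain ⟨a, ha⟩ := Function.ne_iff.mp hne
    exact Finset.prod_eq_zero (Finset.mem_univ a) (huo _ _ _ ha)
  -- ε is nonnegative
  have hε : 0 ≤ ε := by
    set u0 : Fin κ → Fin n → ℝ := fun _ t => if t = (⟨0, hn⟩ : Fin n) then 1 else 0 with hu0_def
    have hu0 : ∀ i, enorm2 (u0 i) = 1 := by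
      intro i
      simp [enorm2, hu0_def, apply_ite (fun x : ℝ => x ^ 2)]
    have hv0 : kron u0 ∈ S1 n κ := ⟨u0, hu0, rfl⟩
    have h := hA ⟨0, hd'⟩ _ (Or.inl hv0)
    rw [S1_enorm2 hv0, mul_one, mul_one] at h
    linarith [h.1, h.2]
  set η : ℝ := (2 * ((r ^ κ : ℕ) : ℝ) - 1) * ε with hη_def
  have hrR : ((r ^ κ : ℕ) : ℝ) = (r : ℝ) ^ κ := by push_cast; ring
  have hr1 : (1 : ℝ) ≤ (r : ℝ) := by exact_mod_cast Nat.one_le_of_lt hr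
  have hP1 : (1 : ℝ) ≤ (r : ℝ) ^ κ := one_le_pow₀ hr1
  have hPle : (r : ℝ) ^ κ ≤ (r : ℝ) ^ (κ * d') :=
    pow_le_pow_right₀ hr1 (Nat.le_mul_of_pos_right κ (by omega))
  have hP1' : (1 : ℝ) ≤ (r : ℝ) ^ (κ * d') := le_trans hP1 hPle
  have hd'R : (1 : ℝ) ≤ (d' : ℝ) := by exact_mod_cast hd'
  have hδ0 : 0 ≤ δ := by
    rw [hδ]
    have : (0:ℝ) ≤ (d' : ℝ) := by linarith
    positivity
  have hη0 : 0 ≤ η := by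
    rw [hη_def, hrR]
    nlinarith
  have hkey : 2 * (d' : ℝ) * η ≤ δ := by
    rw [hη_def, hrR, hδ]
    nlinarith
  have hη1 : η ≤ 1 := by nlinarith
  have hlow : 1 - δ ≤ (1 - η) ^ d' := by
    have h1 := one_add_mul_le_pow (a := -η) (by linarith) d'
    have h2 : 1 + (d' : ℝ) * (-η) = 1 - (d' : ℝ) * η := by ring
    rw [h2] at h1
    have h3 : (d' : ℝ) * η ≤ δ := by nlinarith
    calc 1 - δ ≤ 1 - (d' : ℝ) * η := by linarith
      _ ≤ (1 - η) ^ d' := h1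
  have hup : (1 + η) ^ d' ≤ 1 + δ := by
    have h1 := pow_one_add_le η hη0 d' (by linarith)
    linarith
  -- apply the main induction lemma
  set w : Fin d' → Fin (r ^ κ) → Fin m → ℝ := fun i k => (A i).mulVec (V i k) with hw_def
  have hw : ∀ i (c : Fin (r ^ κ) → ℝ),
      (1 - η) * (∑ k, c k ^ 2) ≤ enorm2 (fun x => ∑ k, c k * w i k x) ∧
        enorm2 (fun x => ∑ k, c k * w i k x) ≤ (1 + η) * (∑ k, c k ^ 2) := by
    intro i c
    refine lemB ε hε (fun k => (A i).mulVec (V i k)) ?_ ?_ c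
    · intro k
      have h := hA i _ (Or.inl (hVS1 i k))
      rw [S1_enorm2 (hVS1 i k), mul_one, mul_one] at h
      exact h
    · intro k k' hk
      exact lemA (A i) ε (hA i) (hVS1 i k) (hVS1 i k') (hVorth i k k' hk)
  have hQ := lemQ η hη0 hη1 d' w hw D
  have hEnorm : enorm2 (modewiseAll A (reshape n κ d' X)) =
      ∑ ℓ : Fin d' → Fin m, (∑ K, D K * ∏ i, w i (K i) (ℓ i)) ^ 2 := by
    rw [hmod]
    rfl
  have hXn : enorm2 X = ∑ k, C k ^ 2 := by
    have : X = fun t => ∑ k, C k * ∏ i, u i (k i) (t i) := funext hXeq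
    rw [this]
    exact gram_ortho C u hu1 huo
  have hDC : (∑ K, D K ^ 2) = ∑ k, C k ^ 2 :=
    Equiv.sum_comp (reshapeIdx r κ d').symm (fun k => C k ^ 2)
  have hXD : enorm2 X = ∑ K, D K ^ 2 := by rw [hXn, ← hDC]
  have hX0 : 0 ≤ enorm2 X := enorm2_nonneg X
  constructor
  · calc (1 - δ) * enorm2 X ≤ (1 - η) ^ d' * enorm2 X :=
        mul_le_mul_of_nonneg_right hlow hX0
      _ = (1 - η) ^ d' * ∑ K, D K ^ 2 := by rw [hXD]
      _ ≤ ∑ ℓ : Fin d' → Fin m, (∑ K, D K * ∏ i, w i (K i) (ℓ i)) ^ 2 := hQ.1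
      _ = enorm2 (modewiseAll A (reshape n κ d' X)) := hEnorm.symm
  · calc enorm2 (modewiseAll A (reshape n κ d' X))
        = ∑ ℓ : Fin d' → Fin m, (∑ K, D K * ∏ i, w i (K i) (ℓ i)) ^ 2 := hEnorm
      _ ≤ (1 + η) ^ d' * ∑ K, D K ^ 2 := hQ.2
      _ = (1 + η) ^ d' * enorm2 X := by rw [hXD]
      _ ≤ (1 + δ) * enorm2 X := mul_le_mul_of_nonneg_right hup hX0
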